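/- Let a be a nonzero integer and let b, c ≥ 1 be integers. Then [a, 2, …, 2, −2, …, −2] (with b copies of 2 followed by c copies of −2 after the entry a) = [a − 1, −(b+1), −2, c]. -/

import Mathlib

/-- The (subtractive) continued fraction value of a finite list of rationals:
`cf [] = 0` and `cf (a :: t) = (a - cf t)⁻¹`. -/
def cf : List ℚ → ℚ
  | [] => 0
  | a :: t => (a - cf t)⁻¹

/-!
Prepending an entry `2` is a parabolic Möbius map with fixed point `1`: in the coordinate
`(1 - x)⁻¹` it is a translation by one. Since `[-2, …, -2] = -c/(c + 1)`, this gives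
`[2, …, 2, -2, …, -2] = 1 - (b + (c + 1)/(2c + 1))⁻¹`, while the three-term fraction
`[-(b + 1), -2, c]` evaluates to `-(b + (c + 1)/(2c + 1))⁻¹`, so the two sides agree after the
first entry once it is lowered by one.
-/

open List

lemma cf_replicate_neg_two (c : ℕ) : cf (replicate c (-2)) = -c / (c + 1) := by
  induction c with
  | zero => simp [cf]
  | succ n ih =>
    rw [replicate_succ, cf, ih, show -2 - -n / (n + 1) = -(n + 2) / (n + 1 : ℚ) by field_simp; ring,
      inv_div]
    push_cast
    field_simp
    ring

lemma cf_replicate_two_append (b : ℕ) {t : List ℚ} (ht : cf t < 1) :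
    cf (replicate b 2 ++ t) = 1 - (b + (1 - cf t)⁻¹)⁻¹ := by
  induction b with
  | zero => simp
  | succ n ih =>
    have hy : 0 < (1 - cf t)⁻¹ := inv_pos.2 (sub_pos.2 ht)
    generalize (1 - cf t)⁻¹ = y at hy ih
    rw [replicate_succ, cons_append, cf, ih,
      show 2 - (1 - (n + y)⁻¹) = (n + 1 + y) / (n + y) by field_simp; ring, inv_div]
    push_cast
    field_simp
    ring

lemma cf_neg_succ_neg_two (b : ℚ) {c : ℚ} (hc : 0 < c) :
    cf [-(b + 1), -2, c] = -(b + (c + 1) / (2 * c + 1))⁻¹ := by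
  simp only [cf, sub_zero]
  rw [show -2 - c⁻¹ = -(2 * c + 1) / c by field_simp; ring, inv_div, div_neg, ← inv_neg]
  congr 1
  field_simp
  ring

theorem stmt_13_general (a : ℤ) (b c : ℕ) (hc : 1 ≤ c) :
    cf ((a : ℚ) :: (List.replicate b (2 : ℚ) ++ List.replicate c (-2 : ℚ))) =
      cf [(a : ℚ) - 1, -((b : ℚ) + 1), -2, (c : ℚ)] := by
  have hneg := cf_replicate_neg_two c
  have hlt : cf (replicate c (-2)) < 1 := by
    rw [hneg]
    exact (div_nonpos_of_nonpos_of_nonneg (by simp) (by positivity)).trans_lt one_pos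
  have hshift : 1 - cf (replicate c (-2)) = (2 * c + 1) / (c + 1) := by
    rw [hneg]
    field_simp
    ring
  rw [cf, cf_replicate_two_append b hlt, hshift, inv_div, cf,
    cf_neg_succ_neg_two _ (by exact_mod_cast hc)]
  ring

theorem stmt_13 (a : ℤ) (ha : a ≠ 0) (b c : ℕ) (hb : 1 ≤ b) (hc : 1 ≤ c) :
    cf ((a : ℚ) :: (List.replicate b (2 : ℚ) ++ List.replicate c (-2 : ℚ))) =
      cf [(a : ℚ) - 1, -((b : ℚ) + 1), -2, (c : ℚ)] :=
  stmt_13_general a b c hc
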